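/- arXiv:2410.11558 — 2 statements merged into one kernel-verified Lean document; each statement's English description precedes it below -/
import Mathlib

section
/- Let L : ℝ^d × ℝ → ℝ be a smooth Lagrangian in variables (q, S) (independent of velocity), set H = −L, let Λ : ℝ^d × ℝ → Mat_{d×d}(ℝ) take values in symmetric invertible matrices with inverse Γ(q,S) = Λ(q,S)⁻¹, and let (q(t), S(t)) be a smooth curve along which T := ∂H/∂S ≠ 0. Then the curve satisfies q̇ = −Γ·(∂H/∂q) and Ṡ = (1/T)·⟨∂H/∂q, Γ ∂H/∂q⟩ (equivalently, ∂L/∂q = Λ q̇ and (∂L/∂S)·Ṡ = −⟨q̇, Λ q̇⟩) if and only if for every smooth F : ℝ^d × ℝ → ℝ one has d/dt F(q(t),S(t)) = (F,H;S,H) along the curve, where (F,G;M,N) = (1/T)·(⟨∂N/∂q, Γ ∂G/∂q⟩·(∂F/∂S)·(∂M/∂S) − ⟨∂F/∂q, Γ ∂N/∂q⟩·(∂G/∂S)·(∂M/∂S) + ⟨∂M/∂q, Γ ∂F/∂q⟩·(∂G/∂S)·(∂N/∂S) − ⟨∂M/∂q, Γ ∂G/∂q⟩·(∂F/∂S)·(∂N/∂S)),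 S in the bracket denoting the coordinate function (q,S) ↦ S: the dynamics is a pure dissipative metriplectic motion with no symplectic part. -/
open scoped RealInnerProductSpace

noncomputable section

/-- Partial gradient of `F (q, S)` in the first (position) variable. -/
def pdq {d : ℕ} (F : EuclideanSpace ℝ (Fin d) → ℝ → ℝ)
    (q : EuclideanSpace ℝ (Fin d)) (S : ℝ) : EuclideanSpace ℝ (Fin d) :=
  gradient (fun x => F x S) q

/-- Partial derivative of `F (q, S)` in the (entropy) variable. -/
def pdS {d : ℕ} (F : EuclideanSpace ℝ (Fin d) → ℝ → ℝ)
    (q : EuclideanSpace ℝ (Fin d)) (S : ℝ) : ℝ :=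
  deriv (fun s => F q s) S

/-- Matrix-vector action on Euclidean space. -/
def mulVecE {d : ℕ} (A : Matrix (Fin d) (Fin d) ℝ) (v : EuclideanSpace ℝ (Fin d)) :
    EuclideanSpace ℝ (Fin d) :=
  (WithLp.equiv 2 (Fin d → ℝ)).symm (A.mulVec ((WithLp.equiv 2 (Fin d → ℝ)) v))

/-- The purely dissipative metriplectic 4-bracket of a thermodynamic system with
no symplectic part, with `Γ = Λ⁻¹` evaluated at `(q, S)` and `T = ∂H/∂S`. -/
def bracket4nosymp {d : ℕ} (Γ : EuclideanSpace ℝ (Fin d) → ℝ → Matrix (Fin d) (Fin d) ℝ)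
    (H F G M N : EuclideanSpace ℝ (Fin d) → ℝ → ℝ)
    (q : EuclideanSpace ℝ (Fin d)) (S : ℝ) : ℝ :=
  let A := Γ q S
  let T := pdS H q S
  (1 / T) *
    (⟪pdq N q S, mulVecE A (pdq G q S)⟫ * pdS F q S * pdS M q S
      - ⟪pdq F q S, mulVecE A (pdq N q S)⟫ * pdS G q S * pdS M q S
      + ⟪pdq M q S, mulVecE A (pdq F q S)⟫ * pdS G q S * pdS N q S
      - ⟪pdq M q S, mulVecE A (pdq G q S)⟫ * pdS F q S * pdS N q S)

lemma inner_gradient_eq {d : ℕ} (f : EuclideanSpace ℝ (Fin d) → ℝ)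
    (x v : EuclideanSpace ℝ (Fin d)) :
    ⟪gradient f x, v⟫ = fderiv ℝ f x v := by
  rw [gradient, InnerProductSpace.toDual_symm_apply]

/-- Chain rule along the curve. -/
lemma chainRule {d : ℕ} (F : EuclideanSpace ℝ (Fin d) → ℝ → ℝ)
    (hF : ContDiff ℝ (⊤ : ℕ∞) (fun x : EuclideanSpace ℝ (Fin d) × ℝ => F x.1 x.2))
    (q : ℝ → EuclideanSpace ℝ (Fin d)) (S : ℝ → ℝ)
    (hq : ContDiff ℝ (⊤ : ℕ∞) q) (hS : ContDiff ℝ (⊤ : ℕ∞) S) (t : ℝ) :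
    HasDerivAt (fun τ => F (q τ) (S τ))
      (⟪pdq F (q t) (S t), deriv q t⟫ + pdS F (q t) (S t) * deriv S t) t := by
  set Fc : EuclideanSpace ℝ (Fin d) × ℝ → ℝ := fun x => F x.1 x.2 with hFc
  set p : EuclideanSpace ℝ (Fin d) × ℝ := (q t, S t) with hp
  have hFd : HasFDerivAt Fc (fderiv ℝ Fc p) p :=
    (hF.differentiable (by simp) p).hasFDerivAt
  have hqd : HasDerivAt q (deriv q t) t := (hq.differentiable (by simp) t).hasDerivAt
  have hSd : HasDerivAt S (deriv S t) t := (hS.differentiable (by simp) t).hasDerivAt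
  have hc : HasDerivAt (fun τ => (q τ, S τ)) (deriv q t, deriv S t) t := hqd.prodMk hSd
  have hcomp := hFd.comp_hasDerivAt t hc
  have h1 : fderiv ℝ Fc p (deriv q t, 0) = ⟪pdq F (q t) (S t), deriv q t⟫ := by
    have : HasFDerivAt (fun x => F x (S t))
        ((fderiv ℝ Fc p).comp (ContinuousLinearMap.inl ℝ _ ℝ)) (q t) :=
      (hFd.comp (q t) (hasFDerivAt_prodMk_left (𝕜 := ℝ) (q t) (S t)) :)
    rw [pdq, inner_gradient_eq, this.fderiv]
    rfl
  have h2 : fderiv ℝ Fc p (0, deriv S t) = pdS F (q t) (S t) * deriv S t := by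
    have hd : HasDerivAt (fun s => F (q t) s)
        (((fderiv ℝ Fc p).comp (ContinuousLinearMap.inr ℝ _ ℝ)) 1) (S t) :=
      (hFd.comp (S t) (hasFDerivAt_prodMk_right (q t) (S t))).hasDerivAt
    have : pdS F (q t) (S t) = fderiv ℝ Fc p (0, 1) := by
      rw [pdS, hd.deriv]; rfl
    rw [this]
    have : ((0 : EuclideanSpace ℝ (Fin d)), deriv S t)
        = deriv S t • ((0 : EuclideanSpace ℝ (Fin d)), (1:ℝ)) := by simp
    rw [this, map_smul, smul_eq_mul, mul_comm]
  have h3 : fderiv ℝ Fc p (deriv q t, deriv S t)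
      = ⟪pdq F (q t) (S t), deriv q t⟫ + pdS F (q t) (S t) * deriv S t := by
    have : (deriv q t, deriv S t)
        = (deriv q t, (0:ℝ)) + ((0 : EuclideanSpace ℝ (Fin d)), deriv S t) := by simp
    rw [this, map_add, h1, h2]
  rw [← h3]
  exact hcomp

/-- A thermodynamic system with no symplectic part is a purely dissipative
metriplectic system: the equations of motion hold iff every smooth observable
evolves as `Ḟ = (F,H;S,H)`. -/
theorem no_symplectic_part_metriplectic {d : ℕ}
    (L : EuclideanSpace ℝ (Fin d) → ℝ → ℝ)
    (hL : ContDiff ℝ (⊤ : ℕ∞) (fun x : EuclideanSpace ℝ (Fin d) × ℝ => L x.1 x.2))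
    (H : EuclideanSpace ℝ (Fin d) → ℝ → ℝ) (hHdef : ∀ q S, H q S = - L q S)
    (Λ Γ : EuclideanSpace ℝ (Fin d) → ℝ → Matrix (Fin d) (Fin d) ℝ)
    (hΛsymm : ∀ q S, (Λ q S).IsSymm)
    (hΛΓ : ∀ q S, Λ q S * Γ q S = 1 ∧ Γ q S * Λ q S = 1)
    (q : ℝ → EuclideanSpace ℝ (Fin d)) (S : ℝ → ℝ)
    (hq : ContDiff ℝ (⊤ : ℕ∞) q) (hS : ContDiff ℝ (⊤ : ℕ∞) S)
    (hT : ∀ t : ℝ, pdS H (q t) (S t) ≠ 0) :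
    (∀ t : ℝ,
        deriv q t = - mulVecE (Γ (q t) (S t)) (pdq H (q t) (S t))
        ∧ deriv S t = (1 / pdS H (q t) (S t)) *
            ⟪pdq H (q t) (S t), mulVecE (Γ (q t) (S t)) (pdq H (q t) (S t))⟫)
    ↔ (∀ F : EuclideanSpace ℝ (Fin d) → ℝ → ℝ,
        ContDiff ℝ (⊤ : ℕ∞) (fun x : EuclideanSpace ℝ (Fin d) × ℝ => F x.1 x.2) →
        ∀ t : ℝ,
          deriv (fun τ => F (q τ) (S τ)) t
            = bracket4nosymp Γ H F H (fun _ s => s) H (q t) (S t)) := by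
  have hM1 : ∀ t : ℝ, pdq (fun _ s => s) (q t) (S t) = 0 := fun t => gradient_const _ _
  have hM2 : ∀ t : ℝ, pdS (fun _ s => s) (q t) (S t) = 1 := by
    intro t; simp [pdS]
  constructor
  · intro heq F hF t
    rw [(chainRule F hF q S hq hS t).deriv]
    obtain ⟨h1, h2⟩ := heq t
    rw [h1, h2]
    simp only [bracket4nosymp, hM1, hM2, inner_zero_left, inner_neg_right,
      mul_one, mul_zero, zero_mul]
    set T := pdS H (q t) (S t) with hTdef
    set a : ℝ := ⟪pdq H (q t) (S t), mulVecE (Γ (q t) (S t)) (pdq H (q t) (S t))⟫ with ha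
    set b : ℝ := ⟪pdq F (q t) (S t), mulVecE (Γ (q t) (S t)) (pdq H (q t) (S t))⟫ with hb
    have hTne : T ≠ 0 := hT t
    field_simp
    ring
  · intro hbr t
    have hqd : HasDerivAt q (deriv q t) t := (hq.differentiable (by simp) t).hasDerivAt
    constructor
    · -- q equation, componentwise
      ext i
      have hFi : ContDiff ℝ (⊤ : ℕ∞) (fun x : EuclideanSpace ℝ (Fin d) × ℝ => x.1 i) :=
        (EuclideanSpace.proj (𝕜 := ℝ) i).contDiff.comp contDiff_fst
      have h := hbr (fun x _ => x i) hFi t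
      have hderiv : deriv (fun τ => q τ i) t = deriv q t i :=
        ((EuclideanSpace.proj (𝕜 := ℝ) i).hasFDerivAt.comp_hasDerivAt t hqd).deriv
      have hpS : pdS (fun x _ => x i) (q t) (S t) = 0 := by simp [pdS]
      have hpq : ∀ w : EuclideanSpace ℝ (Fin d),
          ⟪pdq (fun x _ => x i) (q t) (S t), w⟫ = w i := by
        intro w
        rw [pdq, inner_gradient_eq]
        have hFd : HasFDerivAt (fun x : EuclideanSpace ℝ (Fin d) => x i)
            (EuclideanSpace.proj (𝕜 := ℝ) i) (q t) :=
          (EuclideanSpace.proj (𝕜 := ℝ) i).hasFDerivAt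
        rw [hFd.fderiv]
        rfl
      rw [hderiv] at h
      simp only [bracket4nosymp, hM1, hM2, hpS, hpq, inner_zero_left,
        mul_one, mul_zero, zero_mul, zero_sub, sub_zero, add_zero, neg_zero] at h
      rw [h]
      have hTne := hT t
      show _ = -(mulVecE (Γ (q t) (S t)) (pdq H (q t) (S t))) i
      field_simp
    · have hFs : ContDiff ℝ (⊤ : ℕ∞) (fun x : EuclideanSpace ℝ (Fin d) × ℝ => x.2) :=
        contDiff_snd
      have h := hbr (fun _ s => s) hFs t
      simp only [bracket4nosymp, hM1, hM2, inner_zero_left, inner_zero_right,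
        mul_one, mul_zero, zero_mul, add_zero, sub_zero, zero_sub, neg_zero] at h
      exact h

end
end

section
/- Consider the two connected pistons system: M > 0, smooth internal energies U_1, U_2 : ℝ × ℝ → ℝ, Hamiltonian H(x,p,S_1,S_2) = p²/(2M) + U_1(x,S_1) + U_2(x,S_2), friction coefficients λ_1, λ_2 ≥ 0, heat-transfer coefficient κ ≥ 0, temperatures T_i := ∂U_i/∂S_i, Poisson bracket {F,G} = (∂F/∂x)(∂G/∂p) − (∂F/∂p)(∂G/∂x), friction 4-brackets (F,G;M,N)_{fr(i)} = (λ_i/T_i)·((∂N/∂p)(∂G/∂p)(∂F/∂S_i)(∂M/∂S_i) − (∂N/∂p)(∂F/∂p)(∂G/∂S_i)(∂M/∂S_i) + (∂M/∂p)(∂F/∂p)(∂G/∂S_i)(∂N/∂S_i) − (∂M/∂p)(∂G/∂p)(∂F/∂S_i)(∂N/∂S_i)) for i = 1,2, and transfer 4-bracket (F,G;M,N)_{tr} = (κ/(T_1 T_2))·((∂F/∂S_1)(∂G/∂S_2) − (∂F/∂S_2)(∂G/∂S_1))·((∂M/∂S_1)(∂N/∂S_2) − (∂M/∂S_2)(∂N/∂S_1)).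 Let (x(t), p(t), S_1(t), S_2(t)) be a smooth curve along which T_1 ≠ 0 and T_2 ≠ 0. If for every smooth F : ℝ⁴ → ℝ one has d/dt F(x,p,S_1,S_2) = {F,H} + (F,H;S,H)_{fr(1)} + (F,H;S,H)_{fr(2)} + (F,H;S,H)_{tr} along the curve, with S := S_1 + S_2, then the curve satisfies ẋ = p/M, ṗ = −∂U_1/∂x − ∂U_2/∂x − (λ_1 + λ_2)·p/M, Ṡ_1 = (λ_1/T_1)·(p/M)² + (κ/T_1)·(T_2 − T_1), and Ṡ_2 = (λ_2/T_2)·(p/M)² + (κ/T_2)·(T_1 − T_2). -/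
noncomputable section

/-- Partial derivative in the position variable. -/
def pdx (F : ℝ → ℝ → ℝ → ℝ → ℝ) (x p S₁ S₂ : ℝ) : ℝ := deriv (fun a => F a p S₁ S₂) x

/-- Partial derivative in the momentum variable. -/
def pdp (F : ℝ → ℝ → ℝ → ℝ → ℝ) (x p S₁ S₂ : ℝ) : ℝ := deriv (fun b => F x b S₁ S₂) p

/-- Partial derivative in the first entropy variable. -/
def pdS₁ (F : ℝ → ℝ → ℝ → ℝ → ℝ) (x p S₁ S₂ : ℝ) : ℝ := deriv (fun s => F x p s S₂) S₁

/-- Partial derivative in the second entropy variable. -/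
def pdS₂ (F : ℝ → ℝ → ℝ → ℝ → ℝ) (x p S₁ S₂ : ℝ) : ℝ := deriv (fun s => F x p S₁ s) S₂

/-- The canonical Poisson bracket of the two-piston system. -/
def poisson (F G : ℝ → ℝ → ℝ → ℝ → ℝ) (x p S₁ S₂ : ℝ) : ℝ :=
  pdx F x p S₁ S₂ * pdp G x p S₁ S₂ - pdp F x p S₁ S₂ * pdx G x p S₁ S₂

/-- The friction 4-bracket of the first piston, `T₁ = ∂U₁/∂S₁`. -/
def bracket4fr₁ (lam₁ : ℝ → ℝ → ℝ) (U₁ : ℝ → ℝ → ℝ) (F G M N : ℝ → ℝ → ℝ → ℝ → ℝ)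
    (x p S₁ S₂ : ℝ) : ℝ :=
  (lam₁ x S₁ / deriv (fun s => U₁ x s) S₁) *
    (pdp N x p S₁ S₂ * pdp G x p S₁ S₂ * pdS₁ F x p S₁ S₂ * pdS₁ M x p S₁ S₂
      - pdp N x p S₁ S₂ * pdp F x p S₁ S₂ * pdS₁ G x p S₁ S₂ * pdS₁ M x p S₁ S₂
      + pdp M x p S₁ S₂ * pdp F x p S₁ S₂ * pdS₁ G x p S₁ S₂ * pdS₁ N x p S₁ S₂
      - pdp M x p S₁ S₂ * pdp G x p S₁ S₂ * pdS₁ F x p S₁ S₂ * pdS₁ N x p S₁ S₂)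

/-- The friction 4-bracket of the second piston, `T₂ = ∂U₂/∂S₂`. -/
def bracket4fr₂ (lam₂ : ℝ → ℝ → ℝ) (U₂ : ℝ → ℝ → ℝ) (F G M N : ℝ → ℝ → ℝ → ℝ → ℝ)
    (x p S₁ S₂ : ℝ) : ℝ :=
  (lam₂ x S₂ / deriv (fun s => U₂ x s) S₂) *
    (pdp N x p S₁ S₂ * pdp G x p S₁ S₂ * pdS₂ F x p S₁ S₂ * pdS₂ M x p S₁ S₂
      - pdp N x p S₁ S₂ * pdp F x p S₁ S₂ * pdS₂ G x p S₁ S₂ * pdS₂ M x p S₁ S₂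
      + pdp M x p S₁ S₂ * pdp F x p S₁ S₂ * pdS₂ G x p S₁ S₂ * pdS₂ N x p S₁ S₂
      - pdp M x p S₁ S₂ * pdp G x p S₁ S₂ * pdS₂ F x p S₁ S₂ * pdS₂ N x p S₁ S₂)

/-- The heat-transfer 4-bracket between the two pistons. -/
def bracket4tr (κ : ℝ) (U₁ U₂ : ℝ → ℝ → ℝ) (F G M N : ℝ → ℝ → ℝ → ℝ → ℝ)
    (x p S₁ S₂ : ℝ) : ℝ :=
  (κ / (deriv (fun s => U₁ x s) S₁ * deriv (fun s => U₂ x s) S₂)) *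
    ((pdS₁ F x p S₁ S₂ * pdS₂ G x p S₁ S₂ - pdS₂ F x p S₁ S₂ * pdS₁ G x p S₁ S₂) *
      (pdS₁ M x p S₁ S₂ * pdS₂ N x p S₁ S₂ - pdS₂ M x p S₁ S₂ * pdS₁ N x p S₁ S₂))

/-- If the two connected pistons system evolves metriplectically,
`Ḟ = {F,H} + (F,H;S,H)_{fr(1)} + (F,H;S,H)_{fr(2)} + (F,H;S,H)_{tr}` for all
smooth observables `F`, with total entropy `S = S₁ + S₂`, then it satisfies the
two-piston equations of motion. -/
theorem two_piston_equations (M : ℝ) (hM : 0 < M)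
    (U₁ U₂ : ℝ → ℝ → ℝ)
    (hU₁ : ContDiff ℝ (⊤ : ℕ∞) (fun y : ℝ × ℝ => U₁ y.1 y.2))
    (hU₂ : ContDiff ℝ (⊤ : ℕ∞) (fun y : ℝ × ℝ => U₂ y.1 y.2))
    (lam₁ lam₂ : ℝ → ℝ → ℝ) (hlam₁ : ∀ x S, 0 ≤ lam₁ x S) (hlam₂ : ∀ x S, 0 ≤ lam₂ x S)
    (κ : ℝ) (hκ : 0 ≤ κ)
    (H : ℝ → ℝ → ℝ → ℝ → ℝ)
    (hHdef : ∀ x p S₁ S₂, H x p S₁ S₂ = p ^ 2 / (2 * M) + U₁ x S₁ + U₂ x S₂)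
    (x p S₁ S₂ : ℝ → ℝ)
    (hx : ContDiff ℝ (⊤ : ℕ∞) x) (hp : ContDiff ℝ (⊤ : ℕ∞) p)
    (hS₁ : ContDiff ℝ (⊤ : ℕ∞) S₁) (hS₂ : ContDiff ℝ (⊤ : ℕ∞) S₂)
    (hT₁ : ∀ t : ℝ, deriv (fun s => U₁ (x t) s) (S₁ t) ≠ 0)
    (hT₂ : ∀ t : ℝ, deriv (fun s => U₂ (x t) s) (S₂ t) ≠ 0)
    (hdyn : ∀ F : ℝ → ℝ → ℝ → ℝ → ℝ,
      ContDiff ℝ (⊤ : ℕ∞) (fun y : ℝ × ℝ × ℝ × ℝ => F y.1 y.2.1 y.2.2.1 y.2.2.2) →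
      ∀ t : ℝ,
        deriv (fun τ => F (x τ) (p τ) (S₁ τ) (S₂ τ)) t
          = poisson F H (x t) (p t) (S₁ t) (S₂ t)
            + bracket4fr₁ lam₁ U₁ F H (fun _ _ s₁ s₂ => s₁ + s₂) H (x t) (p t) (S₁ t) (S₂ t)
            + bracket4fr₂ lam₂ U₂ F H (fun _ _ s₁ s₂ => s₁ + s₂) H (x t) (p t) (S₁ t) (S₂ t)
            + bracket4tr κ U₁ U₂ F H (fun _ _ s₁ s₂ => s₁ + s₂) H (x t) (p t) (S₁ t) (S₂ t)) :
    ∀ t : ℝ,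
      deriv x t = p t / M
      ∧ deriv p t = - deriv (fun a => U₁ a (S₁ t)) (x t) - deriv (fun a => U₂ a (S₂ t)) (x t)
          - (lam₁ (x t) (S₁ t) + lam₂ (x t) (S₂ t)) * p t / M
      ∧ deriv S₁ t = (lam₁ (x t) (S₁ t) / deriv (fun s => U₁ (x t) s) (S₁ t)) * (p t / M) ^ 2
          + (κ / deriv (fun s => U₁ (x t) s) (S₁ t)) *
              (deriv (fun s => U₂ (x t) s) (S₂ t) - deriv (fun s => U₁ (x t) s) (S₁ t))
      ∧ deriv S₂ t = (lam₂ (x t) (S₂ t) / deriv (fun s => U₂ (x t) s) (S₂ t)) * (p t / M) ^ 2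
          + (κ / deriv (fun s => U₂ (x t) s) (S₂ t)) *
              (deriv (fun s => U₁ (x t) s) (S₁ t) - deriv (fun s => U₂ (x t) s) (S₂ t)) := by
  intro t
  set X := x t with hX
  set P := p t with hP
  set A := S₁ t with hA
  set B := S₂ t with hB
  -- partial derivatives of H
  have hMne : (M : ℝ) ≠ 0 := ne_of_gt hM
  have hHp : deriv (fun b => H X b A B) P = P / M := by
    have e : (fun b => H X b A B) = fun b => b ^ 2 / (2 * M) + (U₁ X A + U₂ X B) := by
      funext b; rw [hHdef]; ring
    rw [e, deriv_add_const, deriv_div_const, deriv_pow_field]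
    field_simp; ring
  have d1 : DifferentiableAt ℝ (fun a => U₁ a A) X := by
    have := (hU₁.differentiable (by simp)).comp
      ((differentiable_id.prodMk (differentiable_const A)) :
        Differentiable ℝ (fun a : ℝ => (a, A)))
    exact this.differentiableAt
  have d2 : DifferentiableAt ℝ (fun a => U₂ a B) X := by
    have := (hU₂.differentiable (by simp)).comp
      ((differentiable_id.prodMk (differentiable_const B)) :
        Differentiable ℝ (fun a : ℝ => (a, B)))
    exact this.differentiableAt
  have hHx : deriv (fun a => H a P A B) X
      = deriv (fun a => U₁ a A) X + deriv (fun a => U₂ a B) X := by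
    have e : (fun a => H a P A B) = fun a => (fun a => U₁ a A) a + (fun a => U₂ a B) a
        + P ^ 2 / (2 * M) := by
      funext a; rw [hHdef]; ring
    rw [e, deriv_add_const, deriv_fun_add d1 d2]
  have hHs1 : deriv (fun s => H X P s B) A = deriv (fun s => U₁ X s) A := by
    have e : (fun s => H X P s B) = fun s => U₁ X s + (P ^ 2 / (2 * M) + U₂ X B) := by
      funext s; rw [hHdef]; ring
    rw [e, deriv_add_const]
  have hHs2 : deriv (fun s => H X P A s) B = deriv (fun s => U₂ X s) B := by
    have e : (fun s => H X P A s) = fun s => U₂ X s + (P ^ 2 / (2 * M) + U₁ X A) := by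
      funext s; rw [hHdef]; ring
    rw [e, deriv_add_const]
  have hsum : deriv (fun s : ℝ => A + s) B = 1 := by
    exact ((hasDerivAt_id B).const_add A).deriv
  have hT1 : deriv (fun s => U₁ X s) A ≠ 0 := hT₁ t
  have hT2 : deriv (fun s => U₂ X s) B ≠ 0 := hT₂ t
  have cF1 : ContDiff ℝ (⊤ : ℕ∞) (fun y : ℝ × ℝ × ℝ × ℝ => y.1) := contDiff_fst
  have cF2 : ContDiff ℝ (⊤ : ℕ∞) (fun y : ℝ × ℝ × ℝ × ℝ => y.2.1) := contDiff_fst.comp contDiff_snd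
  have cF3 : ContDiff ℝ (⊤ : ℕ∞) (fun y : ℝ × ℝ × ℝ × ℝ => y.2.2.1) :=
    contDiff_fst.comp (contDiff_snd.comp contDiff_snd)
  have cF4 : ContDiff ℝ (⊤ : ℕ∞) (fun y : ℝ × ℝ × ℝ × ℝ => y.2.2.2) :=
    contDiff_snd.comp (contDiff_snd.comp contDiff_snd)
  have E1 := hdyn (fun a _ _ _ => a) cF1 t
  have E2 := hdyn (fun _ b _ _ => b) cF2 t
  have E3 := hdyn (fun _ _ s _ => s) cF3 t
  have E4 := hdyn (fun _ _ _ s => s) cF4 t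
  simp only [poisson, bracket4fr₁, bracket4fr₂, bracket4tr, pdx, pdp, pdS₁, pdS₂,
    deriv_const', deriv_id'', ← hX, ← hP, ← hA, ← hB, hHp, hHx, hHs1, hHs2,
    hsum, deriv_add_const, deriv_const_add] at E1 E2 E3 E4
  refine ⟨by rw [E1]; ring, by rw [E2]; field_simp [hT1, hT2]; ring, ?_, ?_⟩
  · rw [E3]; field_simp [hT1, hT2]; ring
  · rw [E4]; field_simp [hT1, hT2]; ring


end
end
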